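/- Let n = 2^k, let H_n be the normalized Walsh–Hadamard matrix of size n, let U ∈ ℝ^{n×d} have orthonormal columns, and let D̄ ∈ ℝ^{d×d} be a diagonal positive semidefinite matrix with ‖D̄‖₂ ≤ 1; set d_e = ‖D̄‖_F². Let ε ∈ {±1}^n be a vector of n independent Rademacher (uniform ±1) random variables, and let e_j denote the j-th standard basis vector of ℝ^n. Then for any δ ∈ (0,1), P( max_{1≤j≤n} ‖e_jᵀ H_n diag(ε) U D̄‖₂ ≥ √(d_e/n) + √(8 log(n/δ)/n) ) ≤ δ. -/

import Mathlib

open Matrix MeasureTheory ProbabilityTheory Real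
open scoped Classical ENNReal NNReal

noncomputable section

/-- The normalized Walsh–Hadamard matrix of size `n = 2^k`:
`(H_n)_{ij} = n^{-1/2}·(-1)^{Σ_l i_l j_l}` where `i_l, j_l` are the binary digits. -/
def walsh (k : ℕ) : Matrix (Fin (2 ^ k)) (Fin (2 ^ k)) ℝ :=
  Matrix.of fun i j =>
    (Real.sqrt (2 ^ k))⁻¹ *
      (-1 : ℝ) ^ (∑ l ∈ Finset.range k, (Nat.testBit i.val l && Nat.testBit j.val l).toNat)

/-! Fix a row `j` and put `B_j = diag(H_{j·}) U D̄`. Every entry of `H_n` has square `1/n`, so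
`B_jᵀ B_j = D̄²/n` and the row is the Rademacher sum `εᵀ B_j`. Its exponential moment
`𝔼 exp (λ ‖εᵀ B_j‖²)` is bounded by linearising the square with a standard Gaussian vector `g`,
`exp (λ ‖x‖²) = 𝔼_g exp (√(2λ) ⟪x, g⟫)`, averaging over `ε` first (`cosh t ≤ exp (t²/2)`), and then
integrating `exp (λ ‖B_j g‖²)` in closed form, which is possible because `B_jᵀ B_j` is diagonal with
entries at most `1/n`. Markov's inequality with a well-chosen `λ` bounds the tail of each row by
`δ/n`, and a union bound over the `n` rows gives `δ`. -/

open Finset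

section GaussianIntegrals

lemma integral_exp_mul_gaussianReal (t : ℝ) :
    ∫ x, exp (t * x) ∂gaussianReal 0 1 = exp (t ^ 2 / 2) := by
  simpa [mgf] using congrFun (mgf_id_gaussianReal (μ := 0) (v := 1)) t

lemma integral_exp_mul_sq_gaussianReal {a : ℝ} (ha : a < 2⁻¹) :
    ∫ x, exp (a * x ^ 2) ∂gaussianReal 0 1 = (√(1 - 2 * a))⁻¹ := by
  have hdensity (x : ℝ) : gaussianPDFReal 0 1 x • exp (a * x ^ 2)
      = (√(2 * π))⁻¹ * exp (-(2⁻¹ - a) * x ^ 2) := by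
    rw [gaussianPDFReal_def, smul_eq_mul, mul_assoc, ← exp_add]
    norm_num only [NNReal.coe_one, sub_zero, mul_one]
    ring_nf
  have h1 : 0 < 1 - 2 * a := by linarith
  rw [integral_gaussianReal_eq_integral_smul one_ne_zero]
  simp_rw [hdensity]
  rw [integral_const_mul, integral_gaussian, show π / (2⁻¹ - a) = 2 * π / (1 - 2 * a) by
    field_simp, sqrt_div' _ h1.le, ← div_eq_inv_mul, div_div_cancel_left' (by positivity)]

lemma integrable_exp_mul_sq_gaussianReal {a : ℝ} (ha : a < 2⁻¹) :
    Integrable (fun x => exp (a * x ^ 2)) (gaussianReal 0 1) := by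
  by_contra h
  have h1 : 0 < 1 - 2 * a := by linarith
  have := integral_exp_mul_sq_gaussianReal ha
  rw [integral_undef h] at this
  exact (inv_pos.2 (sqrt_pos.2 h1)).ne this

variable {κ : Type*} [Fintype κ]

lemma integral_exp_dotProduct_pi_gaussianReal (w : κ → ℝ) :
    ∫ g, exp (w ⬝ᵥ g) ∂(Measure.pi fun _ : κ => gaussianReal 0 1) = exp ((w ⬝ᵥ w) / 2) := by
  simp_rw [dotProduct, exp_sum, sum_div, exp_sum]
  rw [integral_fintype_prod_eq_prod (f := fun c x => exp (w c * x))]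
  simp_rw [integral_exp_mul_gaussianReal, ← sq]

lemma integrable_exp_dotProduct_pi_gaussianReal (w : κ → ℝ) :
    Integrable (fun g => exp (w ⬝ᵥ g)) (Measure.pi fun _ : κ => gaussianReal 0 1) := by
  simp_rw [dotProduct, exp_sum]
  exact Integrable.fintype_prod (f := fun c x => exp (w c * x))
    fun c => integrable_exp_mul_gaussianReal (w c)

lemma integral_exp_sum_mul_sq_pi_gaussianReal {a : κ → ℝ} (ha : ∀ c, a c < 2⁻¹) :
    ∫ g, exp (∑ c, a c * g c ^ 2) ∂(Measure.pi fun _ : κ => gaussianReal 0 1)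
      = ∏ c, (√(1 - 2 * a c))⁻¹ := by
  simp_rw [exp_sum]
  rw [integral_fintype_prod_eq_prod (f := fun c x => exp (a c * x ^ 2))]
  simp_rw [integral_exp_mul_sq_gaussianReal (ha _)]

lemma integrable_exp_sum_mul_sq_pi_gaussianReal {a : κ → ℝ} (ha : ∀ c, a c < 2⁻¹) :
    Integrable (fun g => exp (∑ c, a c * g c ^ 2)) (Measure.pi fun _ : κ => gaussianReal 0 1) := by
  simp_rw [exp_sum]
  exact Integrable.fintype_prod (f := fun c x => exp (a c * x ^ 2))
    fun c => integrable_exp_mul_sq_gaussianReal (ha c)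

end GaussianIntegrals

section SignVectors

variable {ι κ : Type*} [Fintype ι] [Fintype κ]

def signVectors (ι : Type*) [Fintype ι] : Finset (ι → ℝ) :=
  Fintype.piFinset fun _ => {-1, 1}

lemma sum_signVectors_exp_dotProduct_le (θ : ι → ℝ) :
    ∑ s ∈ signVectors ι, exp (θ ⬝ᵥ s) ≤ 2 ^ Fintype.card ι * exp ((θ ⬝ᵥ θ) / 2) := by
  calc ∑ s ∈ signVectors ι, exp (θ ⬝ᵥ s)
      = ∏ i, ∑ x ∈ {-1, 1}, exp (θ i * x) := by
        simp_rw [prod_univ_sum, dotProduct, exp_sum, signVectors]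
    _ = ∏ i, (exp (-θ i) + exp (θ i)) := by
        simp_rw [sum_pair (show (-1 : ℝ) ≠ 1 by norm_num), mul_neg_one, mul_one]
    _ ≤ ∏ i, 2 * exp (θ i ^ 2 / 2) := by
        gcongr with i
        linarith [cosh_eq (θ i), cosh_le_exp_half_sq (θ i)]
    _ = 2 ^ Fintype.card ι * exp ((θ ⬝ᵥ θ) / 2) := by
        rw [prod_mul_distrib, prod_const, card_univ, ← exp_sum, ← sum_div]
        simp_rw [dotProduct, sq]

lemma dotProduct_mulVec_self_of_transpose_mul_eq_diagonal [DecidableEq κ] {B : Matrix ι κ ℝ}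
    {q : κ → ℝ} (hB : Bᵀ * B = diagonal q) (g : κ → ℝ) :
    (B *ᵥ g) ⬝ᵥ (B *ᵥ g) = ∑ c, q c * g c ^ 2 := by
  rw [dotProduct_mulVec, ← mulVec_transpose, mulVec_mulVec, hB, dotProduct]
  simp_rw [mulVec_diagonal, sq, mul_assoc]

lemma inv_sqrt_one_sub_le_exp {u : ℝ} (hu : u < 1) :
    (√(1 - u))⁻¹ ≤ exp (u / (2 * (1 - u))) := by
  have h1 : 0 < 1 - u := by linarith
  rw [← sqrt_inv, mul_comm, ← div_div, exp_half]
  gcongr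
  calc (1 - u)⁻¹ = u / (1 - u) + 1 := by field_simp; ring
    _ ≤ exp (u / (1 - u)) := add_one_le_exp _

lemma inv_sqrt_one_sub_two_mul_le_exp {l q v : ℝ} (hl : 0 ≤ l) (hq : 0 ≤ q) (hqv : q ≤ v)
    (hlv : 2 * l * v < 1) : (√(1 - 2 * (l * q)))⁻¹ ≤ exp (l * q / (1 - 2 * l * v)) := by
  have hlqv : l * q ≤ l * v := mul_le_mul_of_nonneg_left hqv hl
  refine (inv_sqrt_one_sub_le_exp (by linarith)).trans (exp_le_exp.2 ?_)
  rw [mul_div_mul_left _ _ two_ne_zero]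
  exact div_le_div_of_nonneg_left (by positivity) (by linarith) (by linarith)

lemma sum_signVectors_exp_mul_vecMul_dotProduct_le [DecidableEq κ] (B : Matrix ι κ ℝ) {q : κ → ℝ}
    (hB : Bᵀ * B = diagonal q) (hq : ∀ c, 0 ≤ q c) {v : ℝ} (hqv : ∀ c, q c ≤ v) {l : ℝ}
    (hl : 0 ≤ l) (hlv : 2 * l * v < 1) :
    ∑ s ∈ signVectors ι, exp (l * ((s ᵥ* B) ⬝ᵥ (s ᵥ* B)))
      ≤ 2 ^ Fintype.card ι * exp (l * (∑ c, q c) / (1 - 2 * l * v)) := by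
  set γ : Measure (κ → ℝ) := Measure.pi fun _ => gaussianReal 0 1
  set r := √(2 * l)
  have hr : r ^ 2 / 2 = l := by rw [sq_sqrt (by positivity)]; ring
  have hlq (c : κ) : l * q c < 2⁻¹ := by nlinarith [hq c, hqv c]
  have hlin (s : ι → ℝ) :
      exp (l * ((s ᵥ* B) ⬝ᵥ (s ᵥ* B))) = ∫ g, exp ((r • (s ᵥ* B)) ⬝ᵥ g) ∂γ := by
    rw [integral_exp_dotProduct_pi_gaussianReal, smul_dotProduct, dotProduct_smul, smul_eq_mul,
      smul_eq_mul, ← hr]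
    ring_nf
  have hpoint (g : κ → ℝ) : ∑ s ∈ signVectors ι, exp ((r • (s ᵥ* B)) ⬝ᵥ g)
      ≤ 2 ^ Fintype.card ι * exp (∑ c, l * q c * g c ^ 2) := by
    have hdual (s : ι → ℝ) : (r • (s ᵥ* B)) ⬝ᵥ g = (r • (B *ᵥ g)) ⬝ᵥ s := by
      rw [smul_dotProduct, smul_dotProduct, dotProduct_comm _ s, dotProduct_mulVec]
    simp_rw [hdual]
    refine (sum_signVectors_exp_dotProduct_le _).trans_eq ?_
    rw [smul_dotProduct, dotProduct_smul, dotProduct_mulVec_self_of_transpose_mul_eq_diagonal hB,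
      smul_eq_mul, smul_eq_mul, ← mul_assoc, mul_div_right_comm, ← sq, hr, mul_sum]
    simp_rw [mul_assoc]
  calc ∑ s ∈ signVectors ι, exp (l * ((s ᵥ* B) ⬝ᵥ (s ᵥ* B)))
      = ∫ g, ∑ s ∈ signVectors ι, exp ((r • (s ᵥ* B)) ⬝ᵥ g) ∂γ := by
        simp_rw [hlin]
        exact (integral_finsetSum _ fun s _ => integrable_exp_dotProduct_pi_gaussianReal _).symm
    _ ≤ ∫ g, 2 ^ Fintype.card ι * exp (∑ c, l * q c * g c ^ 2) ∂γ := by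
        refine integral_mono_of_nonneg (ae_of_all _ fun g => by positivity)
          ((integrable_exp_sum_mul_sq_pi_gaussianReal hlq).const_mul _) (ae_of_all _ hpoint)
    _ = 2 ^ Fintype.card ι * ∏ c, (√(1 - 2 * (l * q c)))⁻¹ := by
        rw [integral_const_mul, integral_exp_sum_mul_sq_pi_gaussianReal hlq]
    _ ≤ 2 ^ Fintype.card ι * ∏ c, exp (l * q c / (1 - 2 * l * v)) := by
        gcongr with c
        exact inv_sqrt_one_sub_two_mul_le_exp hl (hq c) (hqv c) hlv
    _ = 2 ^ Fintype.card ι * exp (l * (∑ c, q c) / (1 - 2 * l * v)) := by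
        rw [← exp_sum, mul_sum, sum_div]

end SignVectors

section Chernoff

variable {ι κ : Type*} [Fintype ι] [Fintype κ]

lemma card_filter_le_exp_mul_sum_exp {α : Type*} (S : Finset α) (Q : α → ℝ) (τ : ℝ) {l : ℝ}
    (hl : 0 ≤ l) : (#{s ∈ S | τ ≤ Q s} : ℝ) ≤ exp (-(l * τ)) * ∑ s ∈ S, exp (l * Q s) := by
  calc (#{s ∈ S | τ ≤ Q s} : ℝ) = ∑ s ∈ S with τ ≤ Q s, 1 := by simp
    _ ≤ ∑ s ∈ S with τ ≤ Q s, exp (-(l * τ)) * exp (l * Q s) := by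
        gcongr with s hs
        rw [← exp_add]
        exact one_le_exp (by nlinarith [(mem_filter.1 hs).2])
    _ ≤ ∑ s ∈ S, exp (-(l * τ)) * exp (l * Q s) :=
        sum_le_sum_of_subset_of_nonneg (filter_subset _ _) fun _ _ _ => by positivity
    _ = exp (-(l * τ)) * ∑ s ∈ S, exp (l * Q s) := (mul_sum _ _ _).symm

theorem card_signVectors_vecMul_tail_le [DecidableEq κ] (B : Matrix ι κ ℝ) {q : κ → ℝ}
    (hB : Bᵀ * B = diagonal q) (hq : ∀ c, 0 ≤ q c) {v : ℝ} (hv : 0 < v) (hqv : ∀ c, q c ≤ v)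
    {L : ℝ} (hL : 0 < L) :
    (#{s ∈ signVectors ι | √(∑ c, q c) + √(8 * L * v) ≤ √((s ᵥ* B) ⬝ᵥ (s ᵥ* B))} : ℝ)
      ≤ 2 ^ Fintype.card ι * exp (-L) := by
  set F := √(∑ c, q c)
  set t := √(8 * L * v)
  have hF : 0 ≤ F := sqrt_nonneg _
  have ht : 0 < t := sqrt_pos.2 (by positivity)
  have hF2 : F ^ 2 = ∑ c, q c := sq_sqrt (sum_nonneg fun c _ => hq c)
  have ht2 : t ^ 2 = 8 * L * v := sq_sqrt (by positivity)
  set l := t / (4 * v * (F + t)) with hl_def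
  have hl : 0 ≤ l := by positivity
  have hlv : 1 - 2 * l * v = (2 * F + t) / (2 * (F + t)) := by
    rw [hl_def]
    field_simp
    ring
  have hlv_pos : 0 < 1 - 2 * l * v := by rw [hlv]; positivity
  -- This choice of `l` turns the Chernoff exponent into `-t²(3F + t)/(4v(2F + t)) ≤ -t²/(8v)`.
  have hexponent : l * F ^ 2 / (1 - 2 * l * v) - l * (F + t) ^ 2 ≤ -L := by
    have : l * F ^ 2 / (1 - 2 * l * v) - l * (F + t) ^ 2
        = -(t ^ 2 * (3 * F + t) / (4 * v * (2 * F + t))) := by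
      rw [hlv, hl_def]
      field_simp
      ring
    rw [this, neg_le_neg_iff, le_div_iff₀ (by positivity), ht2]
    nlinarith [mul_pos hL hv]
  have hfilter : {s ∈ signVectors ι | F + t ≤ √((s ᵥ* B) ⬝ᵥ (s ᵥ* B))}
      = {s ∈ signVectors ι | (F + t) ^ 2 ≤ (s ᵥ* B) ⬝ᵥ (s ᵥ* B)} :=
    filter_congr fun s _ => le_sqrt' (by positivity)
  rw [hfilter]
  calc _ ≤ exp (-(l * (F + t) ^ 2))
          * ∑ s ∈ signVectors ι, exp (l * ((s ᵥ* B) ⬝ᵥ (s ᵥ* B))) :=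
        card_filter_le_exp_mul_sum_exp _ _ _ hl
    _ ≤ exp (-(l * (F + t) ^ 2))
          * (2 ^ Fintype.card ι * exp (l * F ^ 2 / (1 - 2 * l * v))) := by
        rw [hF2]
        gcongr
        exact sum_signVectors_exp_mul_vecMul_dotProduct_le B hB hq hqv hl (by linarith)
    _ = 2 ^ Fintype.card ι * exp (l * F ^ 2 / (1 - 2 * l * v) - l * (F + t) ^ 2) := by
        rw [exp_sub, exp_neg]
        ring
    _ ≤ 2 ^ Fintype.card ι * exp (-L) := by gcongr

end Chernoff

section Rademacher

variable {Ω ι : Type*} [MeasurableSpace Ω] [Fintype ι] {P : Measure Ω} {ε : Ω → ι → ℝ}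

theorem measure_preimage_le_card_signVectors (hindep : iIndepFun (fun i ω => ε ω i) P)
    (hdist : ∀ i, P.map (fun ω => ε ω i)
      = (2 : ℝ≥0∞)⁻¹ • (Measure.dirac (-1 : ℝ) + Measure.dirac 1))
    (T : Set (ι → ℝ)) :
    P (ε ⁻¹' T) ≤ ENNReal.ofReal (#{s ∈ signVectors ι | s ∈ T} / 2 ^ Fintype.card ι) := by
  have hlaw (i : ι) {A : Set ℝ} (hA : MeasurableSet A) : P ((fun ω => ε ω i) ⁻¹' A)
      = ((2 : ℝ≥0∞)⁻¹ • (Measure.dirac (-1 : ℝ) + Measure.dirac 1) : Measure ℝ) A := by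
    have hne : P.map (fun ω => ε ω i) ≠ 0 := by
      rw [hdist i]
      intro h
      simpa using congrArg (fun μ : Measure ℝ => μ Set.univ) h
    rw [← hdist i, Measure.map_apply_of_aemeasurable (.of_map_ne_zero hne) hA]
  have hatom (i : ι) {x : ℝ} (hx : x ∈ ({-1, 1} : Finset ℝ)) :
      P ((fun ω => ε ω i) ⁻¹' {x}) = 2⁻¹ := by
    rw [hlaw i (measurableSet_singleton x)]
    rcases mem_insert.1 hx with rfl | hx
    · norm_num [Pi.single_apply]
    · rw [mem_singleton.1 hx]
      norm_num [Pi.single_apply]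
  have hnull (i : ι) : P ((fun ω => ε ω i) ⁻¹' {-1, 1}ᶜ) = 0 := by
    rw [hlaw i (by measurability)]
    simp
  have hpoint {s : ι → ℝ} (hs : s ∈ signVectors ι) : P (ε ⁻¹' {s}) = (2 ^ Fintype.card ι)⁻¹ := by
    have : ε ⁻¹' {s} = ⋂ i, (fun ω => ε ω i) ⁻¹' {s i} := by ext; simp [funext_iff]
    rw [this, hindep.meas_iInter fun i => ⟨{s i}, measurableSet_singleton _, rfl⟩,
      prod_congr rfl fun i _ => hatom i (Fintype.mem_piFinset.1 hs i), prod_const, card_univ,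
      ENNReal.inv_pow]
  have hcover : ε ⁻¹' T ⊆ (⋃ s ∈ {s ∈ signVectors ι | s ∈ T}, ε ⁻¹' {s})
      ∪ ⋃ i, (fun ω => ε ω i) ⁻¹' {-1, 1}ᶜ := by
    intro ω hω
    by_cases hs : ε ω ∈ signVectors ι
    · exact Or.inl (Set.mem_biUnion (mem_filter.2 ⟨hs, hω⟩) rfl)
    · obtain ⟨i, hi⟩ := not_forall.1 (mt Fintype.mem_piFinset.2 hs)
      exact Or.inr (Set.mem_iUnion.2 ⟨i, by simpa using hi⟩)
  calc P (ε ⁻¹' T)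
      ≤ ∑ s ∈ signVectors ι with s ∈ T, P (ε ⁻¹' {s}) + 0 :=
        (measure_mono hcover).trans ((measure_union_le _ _).trans (add_le_add
          (measure_biUnion_finset_le _ _) (measure_iUnion_null hnull).le))
    _ = ENNReal.ofReal (#{s ∈ signVectors ι | s ∈ T} / 2 ^ Fintype.card ι) := by
        rw [add_zero, sum_congr rfl fun s hs => hpoint (mem_filter.1 hs).1, sum_const,
          nsmul_eq_mul, ENNReal.ofReal_div_of_pos (by positivity), ENNReal.ofReal_natCast,
          ENNReal.ofReal_pow zero_le_two, ENNReal.ofReal_ofNat, div_eq_mul_inv]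

end Rademacher

lemma walsh_sq (k : ℕ) (i j : Fin (2 ^ k)) : walsh k i j ^ 2 = (2 ^ k)⁻¹ := by
  rw [walsh, of_apply, mul_pow, inv_pow, sq_sqrt (by positivity), ← pow_mul, mul_comm _ 2,
    pow_mul, neg_one_sq, one_pow, mul_one]

lemma mul_diagonal_mul_apply_eq_vecMul {m ι κ : Type*} [Fintype ι] [DecidableEq ι]
    (A : Matrix m ι ℝ) (x : ι → ℝ) (C : Matrix ι κ ℝ) (j : m) (c : κ) :
    (A * diagonal x * C) j c = (x ᵥ* (diagonal (A j) * C)) c := by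
  rw [mul_apply]
  simp only [mul_diagonal, vecMul, dotProduct, diagonal_mul]
  exact sum_congr rfl fun i _ => by ring

lemma transpose_mul_self_diagonal_mul_mul_diagonal {ι κ : Type*} [Fintype ι] [Fintype κ]
    [DecidableEq ι] [DecidableEq κ] {h : ι → ℝ} {σ : ℝ} (hh : ∀ i, h i ^ 2 = σ)
    {U : Matrix ι κ ℝ} (hU : Uᵀ * U = 1) (a : κ → ℝ) :
    (diagonal h * (U * diagonal a))ᵀ * (diagonal h * (U * diagonal a))
      = diagonal fun c => σ * a c ^ 2 := by
  have hh2 : diagonal h * diagonal h = σ • (1 : Matrix ι ι ℝ) := by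
    rw [diagonal_mul_diagonal, ← diagonal_one, ← diagonal_smul]
    congr 1
    ext i
    simp [← sq, hh]
  calc (diagonal h * (U * diagonal a))ᵀ * (diagonal h * (U * diagonal a))
      = σ • (diagonal a * (Uᵀ * U) * diagonal a) := by
        simp only [transpose_mul, diagonal_transpose, Matrix.mul_assoc]
        rw [← Matrix.mul_assoc (diagonal h), hh2]
        simp
    _ = diagonal fun c => σ * a c ^ 2 := by
        rw [hU, Matrix.mul_one, diagonal_mul_diagonal, ← diagonal_smul]
        congr 1
        ext c
        simp [sq]

theorem card_signVectors_walsh_row_tail_le {k d : ℕ} {U : Matrix (Fin (2 ^ k)) (Fin d) ℝ}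
    (hU : Uᵀ * U = 1) {D : Matrix (Fin d) (Fin d) ℝ} (hD : D.IsDiag) (hD0 : ∀ i, 0 ≤ D i i)
    (hD1 : ∀ i, D i i ≤ 1) {L : ℝ} (hL : 0 < L) (j : Fin (2 ^ k)) :
    (#{s ∈ signVectors (Fin (2 ^ k)) | √((∑ i, ∑ i', D i i' ^ 2) / 2 ^ k) + √(8 * L / 2 ^ k)
        ≤ √(∑ c, ((walsh k * diagonal s * U * D) j c) ^ 2)} : ℝ) ≤ 2 ^ 2 ^ k * exp (-L) := by
  set B := diagonal (walsh k j) * (U * D)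
  have hrow (s : Fin (2 ^ k) → ℝ) :
      ∑ c, ((walsh k * diagonal s * U * D) j c) ^ 2 = (s ᵥ* B) ⬝ᵥ (s ᵥ* B) := by
    simp_rw [Matrix.mul_assoc (walsh k * diagonal s) U D, mul_diagonal_mul_apply_eq_vecMul,
      dotProduct, sq]
    rfl
  have hgram : Bᵀ * B = diagonal fun c => (2 ^ k)⁻¹ * D c c ^ 2 := by
    have := transpose_mul_self_diagonal_mul_mul_diagonal (walsh_sq k j) hU D.diag
    rwa [hD.diagonal_diag] at this
  have htrace : (∑ i, ∑ i', D i i' ^ 2) / 2 ^ k = ∑ c, (2 ^ k)⁻¹ * D c c ^ 2 := by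
    rw [div_eq_inv_mul, mul_sum]
    exact sum_congr rfl fun i _ => congrArg _ (sum_eq_single i
      (fun i' _ hi' => by rw [hD hi'.symm, zero_pow two_ne_zero]) (by simp))
  simp_rw [hrow]
  rw [htrace, div_eq_mul_inv (8 * L)]
  refine (card_signVectors_vecMul_tail_le B hgram (fun c => by positivity) (by positivity)
    (fun c => mul_le_of_le_one_right (by positivity) (pow_le_one₀ (hD0 c) (hD1 c))) hL).trans_eq ?_
  rw [Fintype.card_fin]

theorem stmt12_general {Ω : Type*} [MeasurableSpace Ω] (P : Measure Ω)
    {k d : ℕ}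
    (U : Matrix (Fin (2 ^ k)) (Fin d) ℝ) (hU : Uᵀ * U = 1)
    (Dbar : Matrix (Fin d) (Fin d) ℝ) (hDdiag : Dbar.IsDiag) (hDnn : ∀ i, 0 ≤ Dbar i i)
    (hDle : ∀ i, Dbar i i ≤ 1)
    -- Rademacher vector `ε` with i.i.d. uniform `±1` entries
    (εr : Ω → Fin (2 ^ k) → ℝ)
    (hεindep : iIndepFun (fun i ω => εr ω i) P)
    (hεdist : ∀ i, Measure.map (fun ω => εr ω i) P =
      (2 : ℝ≥0∞)⁻¹ • (Measure.dirac (-1 : ℝ) + Measure.dirac (1 : ℝ)))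
    (δ : ℝ) (hδ : δ ∈ Set.Ioo (0 : ℝ) 1) :
    P {ω | ∃ j : Fin (2 ^ k),
        Real.sqrt ((∑ i, ∑ j', (Dbar i j') ^ 2) / (2 ^ k : ℝ)) +
          Real.sqrt (8 * Real.log ((2 ^ k : ℝ) / δ) / (2 ^ k : ℝ)) ≤
        Real.sqrt (∑ c,
          ((walsh k * Matrix.diagonal (εr ω) * U * Dbar) j c) ^ 2)} ≤
      ENNReal.ofReal δ := by
  obtain ⟨hδ0, hδ1⟩ := hδ
  have hn : (1 : ℝ) ≤ 2 ^ k := one_le_pow₀ one_le_two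
  have hL : 0 < log (2 ^ k / δ) := log_pos ((one_lt_div hδ0).2 (by linarith))
  have hrow (j : Fin (2 ^ k)) : P (εr ⁻¹' {x | √((∑ i, ∑ j', Dbar i j' ^ 2) / 2 ^ k)
      + √(8 * log (2 ^ k / δ) / 2 ^ k) ≤ √(∑ c, ((walsh k * diagonal x * U * Dbar) j c) ^ 2)})
      ≤ ENNReal.ofReal (δ / 2 ^ k) := by
    refine (measure_preimage_le_card_signVectors hεindep hεdist _).trans
      (ENNReal.ofReal_le_ofReal ?_)
    rw [Fintype.card_fin, div_le_iff₀ (by positivity)]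
    refine (card_signVectors_walsh_row_tail_le hU hDdiag hDnn hDle hL j).trans_eq ?_
    rw [exp_neg, exp_log (by positivity), inv_div, mul_comm]
  rw [Set.ofPred_exists]
  refine (measure_iUnion_fintype_le _ _).trans ((sum_le_sum fun j _ => hrow j).trans_eq ?_)
  rw [← ENNReal.ofReal_sum_of_nonneg fun _ _ => by positivity, sum_const, card_univ,
    Fintype.card_fin, nsmul_eq_mul, Nat.cast_pow, Nat.cast_ofNat,
    mul_div_cancel₀ _ (by positivity)]

/-- Row norms of `H_n diag(ε) U D̄` for Rademacher `ε`:
`P(max_j ‖e_jᵀ H_n diag(ε) U D̄‖₂ ≥ √(d_e/n) + √(8 log(n/δ)/n)) ≤ δ`. -/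
theorem stmt12 {Ω : Type*} [MeasurableSpace Ω] (P : Measure Ω) [IsProbabilityMeasure P]
    {k d : ℕ}
    (U : Matrix (Fin (2 ^ k)) (Fin d) ℝ) (hU : Uᵀ * U = 1)
    (Dbar : Matrix (Fin d) (Fin d) ℝ) (hDdiag : Dbar.IsDiag) (hDnn : ∀ i, 0 ≤ Dbar i i)
    (hDle : ∀ i, Dbar i i ≤ 1)
    -- Rademacher vector `ε` with i.i.d. uniform `±1` entries
    (εr : Ω → Fin (2 ^ k) → ℝ)
    (hεindep : iIndepFun (fun i ω => εr ω i) P)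
    (hεdist : ∀ i, Measure.map (fun ω => εr ω i) P =
      (2 : ℝ≥0∞)⁻¹ • (Measure.dirac (-1 : ℝ) + Measure.dirac (1 : ℝ)))
    (δ : ℝ) (hδ : δ ∈ Set.Ioo (0 : ℝ) 1) :
    P {ω | ∃ j : Fin (2 ^ k),
        Real.sqrt ((∑ i, ∑ j', (Dbar i j') ^ 2) / (2 ^ k : ℝ)) +
          Real.sqrt (8 * Real.log ((2 ^ k : ℝ) / δ) / (2 ^ k : ℝ)) ≤
        Real.sqrt (∑ c,
          ((walsh k * Matrix.diagonal (εr ω) * U * Dbar) j c) ^ 2)} ≤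
      ENNReal.ofReal δ :=
  stmt12_general P U hU Dbar hDdiag hDnn hDle εr hεindep hεdist δ hδ

end
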